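/- arXiv:math/0401288 — 5 statements merged into one kernel-verified Lean document; each statement's English description precedes it below -/
import Mathlib

section
/- Let q(x,ξ) be a complex-valued quadratic form on R² that vanishes only at (0,0). Then either the range of q on R² is all of C, or the range of q is contained in a proper closed convex cone in C. -/
open Set ComplexConjugate

noncomputable def Complex.abs : AbsoluteValue ℂ ℝ := NormedField.toAbsoluteValue ℂ

lemma Complex.abs_apply' (z : ℂ) : Complex.abs z = ‖z‖ := rfl

lemma Complex.norm_eq_abs (z : ℂ) : ‖z‖ = Complex.abs z := rfl

lemma Complex.continuous_abs : Continuous Complex.abs := continuous_norm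

lemma Complex.abs_ofReal (r : ℝ) : Complex.abs (r : ℂ) = |r| := Complex.norm_real r

lemma Complex.abs_conj (z : ℂ) : Complex.abs (conj z) = Complex.abs z := Complex.norm_conj z

lemma Complex.sq_abs (z : ℂ) : Complex.abs z ^ 2 = Complex.normSq z := Complex.sq_norm z

lemma Complex.abs_re_le_abs (z : ℂ) : |z.re| ≤ Complex.abs z := Complex.abs_re_le_norm z

lemma surj_aux (α β : ℂ) (h : Complex.abs β < Complex.abs α) (s : ℂ) :
    ∃ u : ℂ, α * u ^ 2 + β * (u * (starRingEnd ℂ) u) = s := by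
  rcases eq_or_ne s 0 with rfl | hs
  · exact ⟨0, by ring⟩
  have hα : α ≠ 0 := by
    intro h0
    rw [h0, map_zero] at h
    exact (Complex.abs.nonneg β).not_gt h
  set A := Complex.abs α with hA
  set B := Complex.abs β with hB
  have hAB : 0 < A - B := sub_pos.mpr h
  set M : ℝ := (Complex.abs s + 1) / (A - B) with hM
  have hM0 : 0 ≤ M := by positivity
  set G : ℝ → ℝ := fun m => Complex.abs (s - (m : ℂ) * β) - m * A with hG
  have hGcont : Continuous G := by
    apply Continuous.sub
    · exact Complex.continuous_abs.comp (by continuity)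
    · continuity
  have hG0 : 0 < G 0 := by
    simp only [hG, Complex.ofReal_zero, zero_mul, sub_zero]
    exact Complex.abs.pos hs
  have hGM : G M < 0 := by
    have h1 : Complex.abs (s - (M : ℂ) * β) ≤ Complex.abs s + M * B := by
      calc Complex.abs (s - (M:ℂ)*β) ≤ Complex.abs s + Complex.abs ((M:ℂ)*β) := by
            rw [← Complex.norm_eq_abs, ← Complex.norm_eq_abs, ← Complex.norm_eq_abs]
            exact norm_sub_le _ _
        _ = Complex.abs s + M * B := by
            rw [map_mul, Complex.abs_ofReal, abs_of_nonneg hM0]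
    have h2 : M * (A - B) = Complex.abs s + 1 := by
      rw [hM]; field_simp
    simp only [hG]; nlinarith
  obtain ⟨m, hmIcc, hGm⟩ := intermediate_value_Icc' hM0 hGcont.continuousOn
    ⟨hGM.le, hG0.le⟩
  have hm0 : 0 < m := by
    rcases lt_or_eq_of_le hmIcc.1 with h' | h'
    · exact h'
    · exfalso; rw [← h'] at hGm; rw [hGm] at hG0; exact lt_irrefl 0 hG0
  have hkey : Complex.abs (s - (m:ℂ)*β) = m * A := by
    have := hGm; simp only [hG] at this; linarith
  set ζ : ℂ := (s - (m:ℂ)*β) / ((m:ℂ) * α) with hζ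
  have hmα : (m:ℂ) * α ≠ 0 := by
    apply mul_ne_zero _ hα
    exact_mod_cast hm0.ne'
  have hζabs : Complex.abs ζ = 1 := by
    rw [hζ, map_div₀, hkey, map_mul, Complex.abs_ofReal, abs_of_nonneg hm0.le]
    exact div_self (mul_pos hm0 (Complex.abs.pos hα)).ne'
  obtain ⟨v, hv⟩ := IsAlgClosed.exists_pow_nat_eq ζ (n := 2) (by norm_num)
  have hvabs : Complex.abs v = 1 := by
    have h1 : (Complex.abs v) ^ 2 = 1 := by
      rw [← map_pow, hv, hζabs]
    nlinarith [Complex.abs.nonneg v]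
  refine ⟨(Real.sqrt m : ℂ) * v, ?_⟩
  have hu2 : ((Real.sqrt m : ℂ) * v) ^ 2 = (m : ℂ) * ζ := by
    rw [mul_pow, hv]
    congr 1
    rw [← Complex.ofReal_pow, Real.sq_sqrt hm0.le]
  have huu : ((Real.sqrt m : ℂ) * v) * (starRingEnd ℂ) ((Real.sqrt m : ℂ) * v) = (m : ℂ) := by
    rw [Complex.mul_conj]
    rw [Complex.normSq_mul, Complex.normSq_ofReal, Real.mul_self_sqrt hm0.le]
    have hv1 : Complex.normSq v = 1 := by
      rw [← Complex.sq_abs, hvabs]; norm_num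
    rw [hv1]
    push_cast; ring
  rw [hu2, huu]
  have hdiv : ζ * ((m:ℂ)*α) = s - (m:ℂ)*β := div_mul_cancel₀ _ hmα
  linear_combination hdiv

lemma abs_compare (a z w : ℂ) (hzz : z - conj z ≠ 0) :
    (Complex.abs (a*(w - conj z)/(z - conj z)))^2
      - (Complex.abs (a*(z - w)/(z - conj z)))^2
    = Complex.normSq a * (4*z.im*w.im) / Complex.normSq (z - conj z) := by
  rw [Complex.sq_abs, Complex.sq_abs, map_div₀, map_div₀, map_mul, map_mul]
  have h4 : Complex.normSq (w - conj z) - Complex.normSq (z - w) = 4*z.im*w.im := by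
    simp [Complex.normSq_apply, Complex.sub_re, Complex.sub_im, Complex.conj_re,
      Complex.conj_im]
    ring
  have hns : Complex.normSq (z - conj z) ≠ 0 := (Complex.normSq_pos.mpr hzz).ne'
  field_simp
  linear_combination Complex.normSq a * h4

lemma key_identity (a b c z w : ℂ) (hb : b = -(a*(z+w))) (hc : c = a*z*w)
    (hzz : z - conj z ≠ 0) (x ξ : ℝ) :
    a*(x:ℂ)^2 + b*x*ξ + c*ξ^2 =
      (a*(w - conj z)/(z - conj z)) * ((x:ℂ) - z*ξ)^2
      + (a*(z - w)/(z - conj z)) * (((x:ℂ) - z*ξ) * conj ((x:ℂ) - z*ξ)) := by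
  have hconj : conj ((x:ℂ) - z*ξ) = (x:ℂ) - conj z * ξ := by
    simp [map_sub, map_mul, Complex.conj_ofReal]
  rw [hconj, hb, hc]
  field_simp
  ring

/-- A complex-valued quadratic form on ℝ² vanishing only at the origin has
range either all of ℂ or contained in a proper closed convex cone. -/
theorem quadratic_form_range_dichotomy (a b c : ℂ)
    (q : ℝ → ℝ → ℂ)
    (hq : ∀ x ξ : ℝ, q x ξ = a * x ^ 2 + b * x * ξ + c * ξ ^ 2)
    (hvanish : ∀ x ξ : ℝ, q x ξ = 0 → x = 0 ∧ ξ = 0) :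
    (Set.range (fun p : ℝ × ℝ => q p.1 p.2) = Set.univ) ∨
    (∃ Γ : Set ℂ, IsClosed Γ ∧ Convex ℝ Γ ∧
      (∀ t : ℝ, 0 ≤ t → ∀ w ∈ Γ, t • w ∈ Γ) ∧ Γ ≠ Set.univ ∧
      Set.range (fun p : ℝ × ℝ => q p.1 p.2) ⊆ Γ) := by
  have ha : a ≠ 0 := by
    intro h0
    have h1 := hvanish 1 0 (by rw [hq]; simp [h0])
    exact one_ne_zero h1.1
  obtain ⟨e, he⟩ := IsAlgClosed.exists_pow_nat_eq (b^2 - 4*a*c) (n := 2) (by norm_num)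
  set z : ℂ := (-b + e)/(2*a) with hzdef
  set w : ℂ := (-b - e)/(2*a) with hwdef
  have hb : b = -(a*(z+w)) := by
    rw [hzdef, hwdef]; field_simp; ring
  have hc : c = a*z*w := by
    rw [hzdef, hwdef]; field_simp; linear_combination he
  -- roots are non-real
  have hzim : z.im ≠ 0 := by
    intro h0
    have hz0 : (z.re : ℂ) = z := Complex.ext (by simp) (by simp [h0])
    have h1 : q z.re 1 = 0 := by
      rw [hq]; push_cast; rw [hz0]; linear_combination z*hb + hc
    exact one_ne_zero (hvanish z.re 1 h1).2
  have hwim : w.im ≠ 0 := by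
    intro h0
    have hw0 : (w.re : ℂ) = w := Complex.ext (by simp) (by simp [h0])
    have h1 : q w.re 1 = 0 := by
      rw [hq]; push_cast; rw [hw0]; linear_combination w*hb + hc
    exact one_ne_zero (hvanish w.re 1 h1).2
  have hzz : z - conj z ≠ 0 := by
    intro h0
    apply hzim
    have h1 := congrArg Complex.im h0
    simp [Complex.sub_im, Complex.conj_im] at h1
    linarith
  set α : ℂ := a*(w - conj z)/(z - conj z) with hαdef
  set β : ℂ := a*(z - w)/(z - conj z) with hβdef
  have key : ∀ x ξ : ℝ, q x ξ = α * ((x:ℂ) - z*ξ)^2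
      + β * (((x:ℂ) - z*ξ) * conj ((x:ℂ) - z*ξ)) := by
    intro x ξ
    rw [hq, hαdef, hβdef]
    exact key_identity a b c z w hb hc hzz x ξ
  -- abs comparison
  have hns : 0 < Complex.normSq (z - conj z) := Complex.normSq_pos.mpr hzz
  have hnsa : 0 < Complex.normSq a := Complex.normSq_pos.mpr ha
  have hαβ2 : (Complex.abs α)^2 - (Complex.abs β)^2
      = Complex.normSq a * (4*z.im*w.im) / Complex.normSq (z - conj z) := by
    have h5 := abs_compare a z w hzz
    rw [← hαdef, ← hβdef] at h5
    exact h5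
  rcases lt_trichotomy (z.im * w.im) 0 with hsign | hsign | hsign
  · -- half-plane case
    have hd : (Complex.abs α)^2 - (Complex.abs β)^2 < 0 := by
      rw [hαβ2]
      apply div_neg_of_neg_of_pos _ hns
      nlinarith
    have hlt : Complex.abs α < Complex.abs β := by
      nlinarith [Complex.abs.nonneg α, Complex.abs.nonneg β]
    have hβ0 : β ≠ 0 := by
      intro h0
      rw [h0, map_zero] at hlt
      exact (Complex.abs.nonneg α).not_gt hlt
    right
    refine ⟨{ζ : ℂ | 0 ≤ (conj β * ζ).re}, ?_, ?_, ?_, ?_, ?_⟩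
    · exact isClosed_le continuous_const
        (Complex.continuous_re.comp (continuous_const.mul continuous_id))
    · intro p hp r hr s t hs ht hst
      simp only [Set.mem_setOf_eq] at *
      have hexp : (conj β * (s • p + t • r)).re
          = s * (conj β * p).re + t * (conj β * r).re := by
        simp [Complex.real_smul, mul_add, Complex.add_re, mul_left_comm,
          Complex.re_ofReal_mul]
      rw [hexp]
      have := mul_nonneg hs hp
      have := mul_nonneg ht hr
      linarith
    · intro t ht ζ hζ
      simp only [Set.mem_setOf_eq] at *
      have hexp : (conj β * (t • ζ)).re = t * (conj β * ζ).re := by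
        simp [Complex.real_smul, mul_left_comm, Complex.re_ofReal_mul]
      rw [hexp]
      exact mul_nonneg ht hζ
    · intro hU
      have h1 : -β ∈ {ζ : ℂ | 0 ≤ (conj β * ζ).re} := by rw [hU]; trivial
      simp only [Set.mem_setOf_eq] at h1
      have h2 : (conj β * (-β)).re = -Complex.normSq β := by
        rw [mul_neg, mul_comm, Complex.mul_conj]
        simp
      rw [h2] at h1
      have := Complex.normSq_pos.mpr hβ0
      linarith
    · rintro ζ ⟨⟨x, ξ⟩, rfl⟩
      simp only [Set.mem_setOf_eq]
      rw [key x ξ]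
      set u : ℂ := (x:ℂ) - z*ξ with hudef
      have e0 : conj β * (α*u^2 + β*(u*conj u))
          = conj β*α*u^2 + ((Complex.normSq β * Complex.normSq u : ℝ) : ℂ) := by
        calc conj β * (α*u^2 + β*(u*conj u))
            = conj β*α*u^2 + (β * conj β) * (u * conj u) := by ring
          _ = conj β*α*u^2 + ((Complex.normSq β : ℂ)) * ((Complex.normSq u : ℂ)) := by
              rw [Complex.mul_conj, Complex.mul_conj]
          _ = _ := by push_cast; ring
      have e1 : (conj β * (α*u^2 + β*(u*conj u))).re
          = (conj β*α*u^2).re + Complex.normSq β * Complex.normSq u := by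
        rw [e0, Complex.add_re, Complex.ofReal_re]
      have e2 : -(Complex.abs β * Complex.abs α * (Complex.abs u)^2)
          ≤ (conj β*α*u^2).re := by
        have h1 : |(conj β*α*u^2).re| ≤ Complex.abs (conj β*α*u^2) :=
          Complex.abs_re_le_abs _
        have h2 : Complex.abs (conj β*α*u^2)
            = Complex.abs β * Complex.abs α * (Complex.abs u)^2 := by
          simp [map_mul, map_pow, Complex.abs_conj]
        rw [h2] at h1
        have := (abs_le.mp h1).1
        linarith
      rw [e1]
      have e3 : Complex.normSq β = (Complex.abs β)^2 := (Complex.sq_abs β).symm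
      have e4 : Complex.normSq u = (Complex.abs u)^2 := (Complex.sq_abs u).symm
      rw [e3, e4]
      nlinarith [mul_nonneg (mul_nonneg (sub_nonneg.mpr hlt.le) (Complex.abs.nonneg β))
        (sq_nonneg (Complex.abs u))]
  · exfalso
    rcases mul_eq_zero.mp hsign with h0 | h0
    · exact hzim h0
    · exact hwim h0
  · -- surjective case
    have hd : 0 < (Complex.abs α)^2 - (Complex.abs β)^2 := by
      rw [hαβ2]
      apply div_pos _ hns
      nlinarith
    have hlt : Complex.abs β < Complex.abs α := by
      nlinarith [Complex.abs.nonneg α, Complex.abs.nonneg β]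
    left
    apply Set.eq_univ_of_forall
    intro s
    obtain ⟨u, hu⟩ := surj_aux α β hlt s
    set ξ : ℝ := -u.im / z.im with hξdef
    set x : ℝ := u.re - z.re * u.im / z.im with hxdef
    have hxu : (x:ℂ) - z*ξ = u := by
      apply Complex.ext
      · simp [hxdef, hξdef, Complex.sub_re, Complex.mul_re, Complex.ofReal_re,
          Complex.ofReal_im]
        field_simp
        ring
      · simp [hξdef, Complex.sub_im, Complex.mul_im, Complex.ofReal_re,
          Complex.ofReal_im]
        field_simp
    exact ⟨(x, ξ), by simp only; rw [key x ξ, hxu]; exact hu⟩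
end

section
/- Let γ ∈ C with |γ| < 1 and β ∈ C, β ≠ 0. The function z ↦ γ|z|² + z̄² restricted to the unit circle has winding number −2 around 0; in particular its range covers, after scaling by positive reals, all of C. Consequently the quadratic form q(z) = (1/β)(γ|z|² + z̄²) on R² ≅ C has range equal to all of C. -/
open Complex

private lemma nonzero_aux (γ : ℂ) (hγ : ‖γ‖ < 1) (w : ℂ) (hw : ‖w‖ = 1) :
    γ + w ≠ 0 := by
  intro h
  have : w = -γ := by linear_combination h
  rw [this] at hw
  simp only [norm_neg] at hw
  linarith

private lemma one_add_ne (γ : ℂ) (hγ : ‖γ‖ < 1) (θ : ℝ) :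
    1 + γ * Complex.exp (2 * Complex.I * θ) ≠ 0 := by
  have h1 : ‖γ * Complex.exp (2 * Complex.I * θ)‖ < 1 := by
    rw [norm_mul]
    have : ‖Complex.exp (2 * Complex.I * θ)‖ = 1 := by
      rw [Complex.norm_exp]
      simp
    rw [this, mul_one]; exact hγ
  intro h
  have : γ * Complex.exp (2 * Complex.I * θ) = -1 := by linear_combination h
  rw [this] at h1
  simp at h1

private lemma slit_aux (γ : ℂ) (hγ : ‖γ‖ < 1) (θ : ℝ) :
    1 + γ * Complex.exp (2 * Complex.I * θ) ∈ Complex.slitPlane := by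
  have h1 : ‖γ * Complex.exp (2 * Complex.I * θ)‖ < 1 := by
    rw [norm_mul]
    have : ‖Complex.exp (2 * Complex.I * θ)‖ = 1 := by
      rw [Complex.norm_exp]
      simp
    rw [this, mul_one]; exact hγ
  left
  have h2 := Complex.abs_re_le_norm (γ * Complex.exp (2 * Complex.I * θ))
  have : |(γ * Complex.exp (2 * Complex.I * θ)).re| < 1 := lt_of_le_of_lt h2 h1
  have := abs_lt.mp this
  simp only [Complex.add_re, Complex.one_re]
  linarith [this.1]

set_option maxHeartbeats 1000000 in
/-- The curve θ ↦ γ + e^{-2iθ} (the values of z ↦ γ|z|² + z̄² on the unit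
circle) has winding number -2 around 0, and consequently the quadratic form
q(z) = β⁻¹ (γ|z|² + z̄²) has range all of ℂ. -/
theorem winding_and_range_all (γ β : ℂ) (hγ : ‖γ‖ < 1) (hβ : β ≠ 0)
    (c : ℝ → ℂ) (hc : ∀ θ : ℝ, c θ = γ + Complex.exp (-(2 * Complex.I * θ)))
    (q : ℂ → ℂ)
    (hq : ∀ z : ℂ, q z = β⁻¹ * (γ * (‖z‖ ^ 2 : ℝ) + (starRingEnd ℂ z) ^ 2)) :
    (1 / (2 * Real.pi * Complex.I)) *
        (∫ θ in (0:ℝ)..(2 * Real.pi), deriv c θ / c θ) = -2 ∧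
    Set.range q = Set.univ := by
  have hc' : c = fun θ : ℝ => γ + Complex.exp (-(2 * Complex.I * θ)) := funext hc
  have hcne : ∀ θ : ℝ, c θ ≠ 0 := by
    intro θ
    rw [hc]
    apply nonzero_aux γ hγ
    rw [Complex.norm_exp]
    simp
  -- derivative of c
  have hderiv : ∀ θ : ℝ, HasDerivAt c
      (Complex.exp (-(2 * Complex.I * θ)) * -(2 * Complex.I)) θ := by
    intro θ
    rw [hc']
    apply HasDerivAt.comp_ofReal (e := fun z : ℂ => γ + Complex.exp (-(2 * Complex.I * z)))
    have h1 : HasDerivAt (fun z : ℂ => -(2 * Complex.I * z)) (-(2 * Complex.I)) (θ : ℂ) := by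
      exact (((hasDerivAt_id (θ : ℂ)).const_mul (2 * Complex.I)).neg).congr_deriv (by simp)
    simpa using (h1.cexp.const_add γ)
  have hderiv' : ∀ θ : ℝ, deriv c θ =
      Complex.exp (-(2 * Complex.I * θ)) * -(2 * Complex.I) := fun θ => (hderiv θ).deriv
  -- the logarithmic antiderivative
  set F : ℝ → ℂ := fun θ => -(2 * Complex.I) * θ +
    Complex.log (1 + γ * Complex.exp (2 * Complex.I * θ)) with hF
  have hFderiv : ∀ θ : ℝ, HasDerivAt F (deriv c θ / c θ) θ := by
    intro θ
    have h1 : HasDerivAt (fun z : ℂ => 2 * Complex.I * z) (2 * Complex.I) (θ : ℂ) := by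
      simpa using (hasDerivAt_id (θ : ℂ)).const_mul (2 * Complex.I)
    have h2 : HasDerivAt (fun z : ℂ => 1 + γ * Complex.exp (2 * Complex.I * z))
        (γ * (Complex.exp (2 * Complex.I * θ) * (2 * Complex.I))) (θ : ℂ) := by
      simpa using ((h1.cexp.const_mul γ).const_add 1)
    have h3 := (h2.clog (slit_aux γ hγ θ)).const_add (0 : ℂ)
    have h4 : HasDerivAt (fun z : ℂ => -(2 * Complex.I) * z) (-(2 * Complex.I)) (θ : ℂ) := by
      simpa using (hasDerivAt_id (θ : ℂ)).const_mul (-(2 * Complex.I))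
    have h5 := h4.add (h2.clog (slit_aux γ hγ θ))
    have h6 := h5.comp_ofReal
    have heq : -(2 * Complex.I) +
        γ * (Complex.exp (2 * Complex.I * θ) * (2 * Complex.I)) /
          (1 + γ * Complex.exp (2 * Complex.I * θ)) = deriv c θ / c θ := by
      rw [hderiv' θ, hc θ]
      have hne1 := one_add_ne γ hγ θ
      have hne2 : γ + Complex.exp (-(2 * Complex.I * θ)) ≠ 0 := by
        rw [← hc θ]; exact hcne θ
      have hee : Complex.exp (-(2 * Complex.I * θ)) * Complex.exp (2 * Complex.I * θ) = 1 := by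
        rw [← Complex.exp_add]; simp
      field_simp
      ring_nf
      ring_nf at hee ⊢
      linear_combination γ * hee
    exact heq ▸ h6
  have hcont : Continuous fun θ : ℝ => deriv c θ / c θ := by
    have hc1 : Continuous c := by
      rw [hc']; continuity
    have hc2 : Continuous fun θ : ℝ => deriv c θ := by
      have : (fun θ : ℝ => deriv c θ) =
          fun θ : ℝ => Complex.exp (-(2 * Complex.I * θ)) * -(2 * Complex.I) :=
        funext hderiv'
      rw [this]; continuity
    exact hc2.div hc1 hcne
  have hint : IntervalIntegrable (fun θ : ℝ => deriv c θ / c θ)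
      MeasureTheory.volume 0 (2 * Real.pi) := hcont.intervalIntegrable _ _
  have hkey : (∫ θ in (0:ℝ)..(2 * Real.pi), deriv c θ / c θ) =
      F (2 * Real.pi) - F 0 :=
    intervalIntegral.integral_eq_sub_of_hasDerivAt (fun t _ => hFderiv t) hint
  have hexp4pi : Complex.exp (2 * Complex.I * ((2 * Real.pi : ℝ) : ℂ)) = 1 := by
    push_cast
    have : (2 : ℂ) * Complex.I * (2 * Real.pi) = (2 : ℕ) * (2 * Real.pi * Complex.I) := by
      push_cast; ring
    rw [this, Complex.exp_nat_mul, Complex.exp_two_pi_mul_I, one_pow]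
  have hFval : F (2 * Real.pi) - F 0 = -(2 * Complex.I) * (2 * Real.pi) := by
    simp only [hF]
    rw [hexp4pi]
    push_cast
    ring_nf
    simp
  have hpi : (Real.pi : ℂ) ≠ 0 := by
    simpa using Real.pi_ne_zero
  constructor
  · rw [hkey, hFval]
    field_simp
  · -- range
    ext w
    simp only [Set.mem_range, Set.mem_univ, iff_true]
    set t : ℂ := β * w with ht
    by_cases htz : t = 0
    · refine ⟨0, ?_⟩
      have hw : w = 0 := by
        rcases mul_eq_zero.mp htz with h | h
        · exact absurd h hβ
        · exact h
      rw [hq, hw]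
      simp
    · -- find lambda with ‖λ • t - γ‖ = 1
      have htn : (0:ℝ) < ‖t‖ := norm_pos_iff.mpr htz
      set L : ℝ := 2 / ‖t‖ with hL
      have hcontf : ContinuousOn (fun l : ℝ => ‖(l : ℂ) * t - γ‖) (Set.Icc 0 L) :=
        (((Complex.continuous_ofReal.mul continuous_const).sub continuous_const).norm).continuousOn
      have h0 : ‖((0:ℝ) : ℂ) * t - γ‖ ≤ 1 := by
        simp only [Complex.ofReal_zero, zero_mul, zero_sub, norm_neg]
        exact le_of_lt hγ
      have hLv : (1:ℝ) ≤ ‖((L:ℝ) : ℂ) * t - γ‖ := by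
        have h1 : ‖((L:ℝ) : ℂ) * t‖ - ‖γ‖ ≤ ‖((L:ℝ) : ℂ) * t - γ‖ :=
          norm_sub_norm_le _ _
        have h2 : ‖((L:ℝ) : ℂ) * t‖ = 2 := by
          rw [norm_mul, Complex.norm_real, Real.norm_eq_abs, hL]
          rw [abs_of_pos (by positivity), div_mul_cancel₀]
          exact ne_of_gt htn
        linarith
      have hLpos : (0:ℝ) ≤ L := by positivity
      obtain ⟨l, hlmem, hlval⟩ := intermediate_value_Icc hLpos hcontf
        (Set.mem_Icc.mpr ⟨h0, hLv⟩)
      have hlpos : 0 < l := by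
        rcases lt_or_eq_of_le hlmem.1 with h | h
        · exact h
        · exfalso
          rw [← h] at hlval
          simp only [Complex.ofReal_zero, zero_mul, zero_sub, norm_neg] at hlval
          linarith
      set u : ℂ := (l : ℂ) * t - γ with hu
      have hun : ‖u‖ = 1 := hlval
      obtain ⟨v, hv⟩ := IsAlgClosed.exists_pow_nat_eq u (n := 2) (by norm_num)
      have hvn : ‖v‖ = 1 := by
        have : ‖v‖ ^ 2 = 1 := by
          rw [← norm_pow, hv, hun]
        nlinarith [norm_nonneg v]
      set r : ℝ := Real.sqrt l⁻¹ with hr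
      have hr2 : r ^ 2 = l⁻¹ := Real.sq_sqrt (by positivity)
      refine ⟨(r : ℂ) * (starRingEnd ℂ v), ?_⟩
      rw [hq]
      have hnorm : ‖(r : ℂ) * (starRingEnd ℂ v)‖ = r := by
        rw [norm_mul, Complex.norm_real, Real.norm_eq_abs,
          _root_.abs_of_nonneg (Real.sqrt_nonneg _),
          show ‖(starRingEnd ℂ) v‖ = ‖v‖ by
            simp,
          hvn, mul_one]
      rw [hnorm]
      have hconj : (starRingEnd ℂ) ((r : ℂ) * (starRingEnd ℂ v)) = (r : ℂ) * v := by
        simp [Complex.conj_ofReal]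
      rw [hconj]
      have hrc : ((r ^ 2 : ℝ) : ℂ) = ((l : ℂ))⁻¹ := by
        rw [hr2]; push_cast; ring
      have hlc : ((l : ℝ) : ℂ) ≠ 0 := by
        simpa using ne_of_gt hlpos
      have hexpand : ((r : ℂ) * v) ^ 2 = ((l : ℂ))⁻¹ * u := by
        rw [mul_pow, hv, ← Complex.ofReal_pow, hrc]
      rw [hexpand, hrc]
      rw [hu, ht]
      field_simp
      ring
end

section
/- Every complex-valued quadratic form q on R² that vanishes only at the origin can be written, in suitable real linear coordinates, as q(x,ξ) = c(x − iξ)(x − λξ) for some c ∈ C, c ≠ 0, and λ ∈ C with Im λ ≠ 0. -/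
/-- Every complex quadratic form on ℝ² vanishing only at the origin can be
written, in suitable real linear coordinates, as c(x - iξ)(x - λξ) with
c ≠ 0 and Im λ ≠ 0. -/
theorem quadratic_form_factorization (a b c : ℂ)
    (hvanish : ∀ x ξ : ℝ,
      a * (x : ℂ) ^ 2 + b * x * ξ + c * (ξ : ℂ) ^ 2 = 0 → x = 0 ∧ ξ = 0) :
    ∃ (m₁₁ m₁₂ m₂₁ m₂₂ : ℝ) (c₀ lam : ℂ),
      m₁₁ * m₂₂ - m₁₂ * m₂₁ ≠ 0 ∧ c₀ ≠ 0 ∧ lam.im ≠ 0 ∧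
      ∀ x ξ : ℝ,
        a * ((m₁₁ * x + m₁₂ * ξ : ℝ) : ℂ) ^ 2
          + b * ((m₁₁ * x + m₁₂ * ξ : ℝ) : ℂ) * ((m₂₁ * x + m₂₂ * ξ : ℝ) : ℂ)
          + c * ((m₂₁ * x + m₂₂ * ξ : ℝ) : ℂ) ^ 2
        = c₀ * ((x : ℂ) - Complex.I * ξ) * ((x : ℂ) - lam * ξ) := by
  -- a ≠ 0
  have ha : a ≠ 0 := by
    intro h
    have := hvanish 1 0 (by simp [h])
    exact one_ne_zero this.1
  -- square root of the discriminant
  obtain ⟨d, hd⟩ := IsAlgClosed.exists_pow_nat_eq (b ^ 2 - 4 * a * c) (by norm_num : 0 < 2)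
  set s₁ : ℂ := (-b + d) / (2 * a) with hs₁
  set s₂ : ℂ := (-b - d) / (2 * a) with hs₂
  -- the factorization identity
  have key : ∀ X Ξ : ℂ, a * X ^ 2 + b * X * Ξ + c * Ξ ^ 2
      = a * (X - s₁ * Ξ) * (X - s₂ * Ξ) := by
    intro X Ξ
    rw [hs₁, hs₂]
    field_simp
    ring_nf
    rw [show d ^ 2 = b ^ 2 - 4 * a * c from hd]
    ring
  -- both roots are non-real
  have hroot : ∀ s : ℂ, (∀ X Ξ : ℂ, a * X ^ 2 + b * X * Ξ + c * Ξ ^ 2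
      = a * (X - s₁ * Ξ) * (X - s₂ * Ξ)) → (s = s₁ ∨ s = s₂) → s.im ≠ 0 := by
    intro s hk hs him
    have hre : (s.re : ℂ) = s := by
      rw [← Complex.re_add_im s, him]; simp
    have hz : a * (s.re : ℂ) ^ 2 + b * s.re * (1 : ℝ) + c * ((1 : ℝ) : ℂ) ^ 2 = 0 := by
      push_cast
      rw [hk]
      rcases hs with h | h <;> rw [← h, hre] <;> ring
    have := hvanish s.re 1 (by exact_mod_cast hz)
    exact one_ne_zero this.2
  have h1 : s₁.im ≠ 0 := hroot s₁ key (Or.inl rfl)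
  have h2 : s₂.im ≠ 0 := hroot s₂ key (Or.inr rfl)
  clear_value s₁ s₂
  clear hs₁ hs₂
  -- choose coordinates
  refine ⟨1, s₁.re / s₁.im, 0, 1 / s₁.im, a, (s₂ - (s₁.re : ℂ)) / (s₁.im : ℂ),
    by simp [h1], ha, ?_, ?_⟩
  · rw [Complex.div_ofReal_im]
    simp only [Complex.sub_im, Complex.ofReal_im, sub_zero]
    exact div_ne_zero h2 h1
  · intro x ξ
    rw [key]
    have e1 : ((1 * x + s₁.re / s₁.im * ξ : ℝ) : ℂ)
        - s₁ * ((0 * x + 1 / s₁.im * ξ : ℝ) : ℂ) = (x : ℂ) - Complex.I * ξ := by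
      have hrep : s₁ = (s₁.re : ℂ) + (s₁.im : ℂ) * Complex.I := (Complex.re_add_im s₁).symm
      push_cast
      have h1' : (s₁.im : ℂ) ≠ 0 := by exact_mod_cast h1
      field_simp
      linear_combination (-(ξ : ℂ)) * hrep
    have e2 : ((1 * x + s₁.re / s₁.im * ξ : ℝ) : ℂ)
        - s₂ * ((0 * x + 1 / s₁.im * ξ : ℝ) : ℂ)
        = (x : ℂ) - (s₂ - (s₁.re : ℂ)) / (s₁.im : ℂ) * ξ := by
      push_cast
      have h1' : (s₁.im : ℂ) ≠ 0 := by exact_mod_cast h1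
      field_simp
      ring
    rw [e1, e2]
end

section
/- Let p₂ be a quadratic form on R² with Re p₂ positive definite, let Γ = {w ∈ C : |Im w| ≤ C·Re w} be a proper convex cone containing the range of p₂ on R², and let μ, −μ be the eigenvalues of the Hamilton map F of p₂. Then exactly one of μ/i and −μ/i lies in the interior of Γ, i.e. there is a unique eigenvalue μ of F with Re(μ/i) > 0. -/
open Matrix

-- auxiliary lemmas
lemma key_lemma (a b c : ℂ)
    (hpos : ∀ x ξ : ℝ, ¬(x = 0 ∧ ξ = 0) →
      0 < (a * (x : ℂ) ^ 2 + b * x * ξ + c * (ξ : ℂ) ^ 2).re) :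
    ¬((b ^ 2 - 4 * a * c).im = 0 ∧ 0 ≤ (b ^ 2 - 4 * a * c).re) := by
  rintro ⟨him, hre⟩
  have ha : 0 < a.re := by
    have := hpos 1 0 (by simp)
    simpa using this
  have hane : a ≠ 0 := fun h => by simp [h] at ha
  set t : ℝ := Real.sqrt ((b ^ 2 - 4 * a * c).re) with ht
  have ht2 : (t : ℂ) ^ 2 = b ^ 2 - 4 * a * c := by
    have hreal : b ^ 2 - 4 * a * c = (((b ^ 2 - 4 * a * c).re : ℝ) : ℂ) :=
      (Complex.ext (by simp) (by simp [him])).symm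
    have h1 : (t : ℝ) ^ 2 = (b ^ 2 - 4 * a * c).re := Real.sq_sqrt hre
    rw [hreal]
    exact_mod_cast congrArg (fun x : ℝ => (x : ℂ)) h1
  set r : ℂ := (-b + t) / (2 * a) with hr
  set x₀ : ℝ := r.re with hx₀
  set y : ℝ := r.im with hy
  have hX : (x₀ : ℂ) = r - y * Complex.I := by
    linear_combination Complex.re_add_im r
  have h1 : 2 * a * r + b = (t : ℂ) := by
    rw [hr]; field_simp; ring
  have h2 : a * r ^ 2 + b * r + c = 0 := by
    rw [hr]; field_simp; linear_combination ht2
  have key : a * (x₀ : ℂ) ^ 2 + b * x₀ + c = -a * (y : ℂ) ^ 2 - Complex.I * t * y := by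
    rw [hX]
    linear_combination h2 - ((y : ℂ) * Complex.I) * h1 + (a * (y : ℂ) ^ 2) * Complex.I_sq
  have hval := hpos x₀ 1 (by simp)
  rw [show ((1:ℝ):ℂ) = 1 by norm_num] at hval
  simp only [one_pow, mul_one] at hval
  rw [key] at hval
  have : (-a * (y : ℂ) ^ 2 - Complex.I * t * y).re = -(a.re * y ^ 2) := by
    simp [Complex.sub_re, Complex.mul_re, Complex.I_re, Complex.I_im, ← Complex.ofReal_pow]
    try ring
  rw [this] at hval
  nlinarith [sq_nonneg y]

lemma eigen_iff (a b c μ : ℂ) :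
    (∃ v : Fin 2 → ℂ, v ≠ 0 ∧ (!![b / 2, c; -a, -b / 2]).mulVec v = μ • v) ↔
      μ ^ 2 = b ^ 2 / 4 - a * c := by
  have hM : ∀ v : Fin 2 → ℂ, (!![b / 2, c; -a, -b / 2]).mulVec v = μ • v ↔
      (!![b / 2 - μ, c; -a, -b / 2 - μ]).mulVec v = 0 := by
    intro v
    constructor
    · intro h
      funext i
      have := congrFun h i
      fin_cases i <;>
        simp [Matrix.mulVec, dotProduct, Fin.sum_univ_two] at this ⊢ <;>
        linear_combination this
    · intro h
      funext i
      have := congrFun h i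
      fin_cases i <;>
        simp [Matrix.mulVec, dotProduct, Fin.sum_univ_two] at this ⊢ <;>
        linear_combination this
  constructor
  · rintro ⟨v, hv, hmul⟩
    have hdet : (!![b / 2 - μ, c; -a, -b / 2 - μ]).det = 0 :=
      Matrix.exists_mulVec_eq_zero_iff.mp ⟨v, hv, (hM v).mp hmul⟩
    rw [Matrix.det_fin_two_of] at hdet
    linear_combination hdet
  · intro hμ
    have hdet : (!![b / 2 - μ, c; -a, -b / 2 - μ]).det = 0 := by
      rw [Matrix.det_fin_two_of]
      linear_combination hμ
    obtain ⟨v, hv, hmul⟩ := Matrix.exists_mulVec_eq_zero_iff.mpr hdet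
    exact ⟨v, hv, (hM v).mpr hmul⟩

lemma div_I_re (μ : ℂ) : (μ / Complex.I).re = μ.im := by
  rw [Complex.div_I]
  simp [Complex.mul_re]

/-- If Re p₂ is positive definite and the range of p₂ on ℝ² is contained in a
proper cone Γ = {w : |Im w| ≤ C Re w}, then the Hamilton map F of p₂ has a
unique eigenvalue μ with Re(μ/i) > 0. -/
theorem unique_eigenvalue_in_cone (a b c : ℂ) (C : ℝ) (hC : 0 < C)
    (hpos : ∀ x ξ : ℝ, ¬(x = 0 ∧ ξ = 0) →
      0 < (a * (x : ℂ) ^ 2 + b * x * ξ + c * (ξ : ℂ) ^ 2).re)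
    (hrange : ∀ x ξ : ℝ,
      |(a * (x : ℂ) ^ 2 + b * x * ξ + c * (ξ : ℂ) ^ 2).im|
        ≤ C * (a * (x : ℂ) ^ 2 + b * x * ξ + c * (ξ : ℂ) ^ 2).re)
    (F : Matrix (Fin 2) (Fin 2) ℂ)
    (hF : F = !![b / 2, c; -a, -b / 2]) :
    ∃! μ : ℂ, (∃ v : Fin 2 → ℂ, v ≠ 0 ∧ F.mulVec v = μ • v) ∧
      0 < (μ / Complex.I).re := by
  have hkey := key_lemma a b c hpos
  obtain ⟨z, hz⟩ := IsAlgClosed.exists_pow_nat_eq (k := ℂ) (b ^ 2 / 4 - a * c)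
    (n := 2) two_pos
  have hzim : z.im ≠ 0 := by
    intro h0
    apply hkey
    have h4 : b ^ 2 - 4 * a * c = 4 * (b ^ 2 / 4 - a * c) := by ring
    have hzr : z = ((z.re : ℝ) : ℂ) := Complex.ext rfl (by simp [h0])
    rw [h4, ← hz, hzr]
    constructor
    · simp [← Complex.ofReal_pow]
    · rw [show ((4:ℂ) * ((z.re : ℝ) : ℂ) ^ 2) = (((4 * z.re ^ 2 : ℝ)) : ℂ) by push_cast; ring]
      rw [Complex.ofReal_re]
      positivity
  set μ₀ : ℂ := if 0 < z.im then z else -z with hμ₀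
  have hμ₀sq : μ₀ ^ 2 = b ^ 2 / 4 - a * c := by
    rw [hμ₀]
    split_ifs <;> simp [neg_pow, hz]
  have hμ₀im : 0 < μ₀.im := by
    rw [hμ₀]
    split_ifs with h
    · exact h
    · simp only [Complex.neg_im]
      cases' lt_or_gt_of_ne hzim with h' h'
      · linarith
      · exact absurd h' h
  refine ⟨μ₀, ⟨?_, ?_⟩, ?_⟩
  · rw [hF]
    exact (eigen_iff a b c μ₀).mpr hμ₀sq
  · rwa [div_I_re]
  · rintro μ ⟨⟨v, hv, hmul⟩, hμpos⟩
    rw [hF] at hmul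
    have hμsq : μ ^ 2 = b ^ 2 / 4 - a * c := (eigen_iff a b c μ).mp ⟨v, hv, hmul⟩
    have : (μ - μ₀) * (μ + μ₀) = 0 := by
      linear_combination hμsq - hμ₀sq
    rcases mul_eq_zero.mp this with h | h
    · exact sub_eq_zero.mp h
    · exfalso
      have hμeq : μ = -μ₀ := by linear_combination h
      rw [div_I_re] at hμpos
      rw [hμeq] at hμpos
      simp only [Complex.neg_im] at hμpos
      linarith
end

section
/- For x ∈ C and 0 ≤ α < π, the supremum over y ∈ R of −Im φ(x,y), where φ(x,y) = (i/e^{iα/2})(x²/2 + y²/2 − √2·y·x), equals Φ₀(x) = cos(α/2)(Re x)²/2 + ((1+sin²(α/2))/cos(α/2))(Im x)²/2 + sin(α/2)(Re x)(Im x). -/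
/-- The supremum over y ∈ ℝ of -Im φ(x,y), where
φ(x,y) = (i/e^{iα/2})(x²/2 + y²/2 - √2 y x), equals Φ₀(x). -/
theorem sup_neg_im_phi (α : ℝ) (h0 : 0 ≤ α) (h1 : α < Real.pi)
    (φ : ℂ → ℝ → ℂ)
    (hφ : ∀ (x : ℂ) (y : ℝ), φ x y =
      Complex.I / Complex.exp (Complex.I * (α / 2)) *
        (x ^ 2 / 2 + (y : ℂ) ^ 2 / 2 - Real.sqrt 2 * y * x))
    (Φ₀ : ℂ → ℝ)
    (hΦ : ∀ x : ℂ, Φ₀ x =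
      Real.cos (α / 2) * x.re ^ 2 / 2
        + (1 + Real.sin (α / 2) ^ 2) / Real.cos (α / 2) * x.im ^ 2 / 2
        + Real.sin (α / 2) * x.re * x.im) :
    ∀ x : ℂ, IsLUB (Set.range fun y : ℝ => -(φ x y).im) (Φ₀ x) := by
  intro x
  set c := Real.cos (α / 2) with hc
  set s := Real.sin (α / 2) with hs
  have hcpos : 0 < c := by
    apply Real.cos_pos_of_mem_Ioo
    constructor
    · nlinarith [Real.pi_pos]
    · linarith
  have hcne : c ≠ 0 := ne_of_gt hcpos
  have hpyth : s ^ 2 + c ^ 2 = 1 := Real.sin_sq_add_cos_sq _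
  have hpC : (s : ℂ) ^ 2 + (c : ℂ) ^ 2 = 1 := by exact_mod_cast hpyth
  -- the coefficient
  have hcoef : Complex.I / Complex.exp (Complex.I * (α / 2)) =
      (s : ℂ) + (c : ℂ) * Complex.I := by
    rw [div_eq_iff (Complex.exp_ne_zero _)]
    have h2 : Complex.I * (α / 2) = ((α / 2 : ℝ) : ℂ) * Complex.I := by
      push_cast; ring
    rw [h2, Complex.exp_mul_I, ← Complex.ofReal_cos, ← Complex.ofReal_sin,
      ← hc, ← hs]
    linear_combination (-Complex.I) * hpC + (-(s : ℂ) * (c : ℂ)) * Complex.I_sq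
  set y₀ : ℝ := Real.sqrt 2 * (x.re + s / c * x.im) with hy₀
  have key : ∀ y : ℝ, -(φ x y).im = Φ₀ x - c / 2 * (y - y₀) ^ 2 := by
    intro y
    rw [hφ, hΦ, hcoef]
    have hsqrt2 : (Real.sqrt 2) ^ 2 = 2 := Real.sq_sqrt (by norm_num)
    have hre2 : (x ^ 2).re = x.re ^ 2 - x.im ^ 2 := by
      rw [sq]; simp [Complex.mul_re]; ring
    have him2 : (x ^ 2).im = 2 * x.re * x.im := by
      rw [sq]; simp [Complex.mul_im]; ring
    have hyre2 : (((y : ℂ)) ^ 2).re = y ^ 2 := by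
      rw [sq]; simp [Complex.mul_re]; ring
    have hyim2 : (((y : ℂ)) ^ 2).im = 0 := by
      rw [sq]; simp [Complex.mul_im]
    simp only [Complex.mul_im, Complex.add_re, Complex.add_im, Complex.sub_re,
      Complex.sub_im, Complex.div_ofNat_re, Complex.div_ofNat_im,
      Complex.mul_re, Complex.I_re, Complex.I_im, Complex.ofReal_re,
      Complex.ofReal_im]
    rw [hre2, him2, hyre2, hyim2, hy₀]
    field_simp
    linear_combination
      (c * x.re + s * x.im) ^ 2 * hsqrt2
      + (x.im ^ 2) * hpyth
  constructor
  · rintro v ⟨y, rfl⟩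
    simp only
    rw [key y]
    nlinarith [sq_nonneg (y - y₀)]
  · intro b hb
    have := hb ⟨y₀, rfl⟩
    simp only at this
    rw [key y₀] at this
    simpa using this
end
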